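/- arXiv:2402.15785 — 2 statements merged into one kernel-verified Lean document; each statement's English description precedes it below -/
import Mathlib

section
/- Let β be a Schwartz function on R^n whose Fourier transform is supported in {10/11 ≤ |ξ| ≤ 11/10}, let N ∈ N, set ζ_N = 10N, and K(y) := β(y − 2^{ζ_N} e_1). Then for any λ ≥ 0, D_λ(K) := ∫_{R^n} |K(y)|(log(e+|y|))^λ dy is comparable to N^λ, with implicit constants depending only on n, λ, and β (not on N). -/
/-!
The weight `w x = log (e + ‖x‖)` satisfies the Peetre-type inequality `w (x + y) ≤ 2 w x w y`,
hence also `w y ≤ 2 w x w (x + y)`. Substituting `y = z + v` in `∫ ‖f (y - v)‖ w(y)^λ` and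
integrating these pointwise bounds against `‖f z‖` squeezes the integral between
`w(v)^λ ∫ ‖f‖ (2w)^(-λ)` and `w(v)^λ ∫ ‖f‖ (2w)^λ`; both constants are finite because `f` is
Schwartz, and the first is positive because `f ≢ 0`. Finally `w (2^(10N) e₁) = log (e + 2^(10N))`
lies between `N` and `8N`.
-/

open MeasureTheory Metric
open scoped ENNReal NNReal FourierTransform SchwartzMap

section LogWeight

variable {E : Type*} [SeminormedAddCommGroup E]

noncomputable def logWeight (x : E) : ℝ := Real.log (Real.exp 1 + ‖x‖)

lemma two_le_exp_one : (2 : ℝ) ≤ Real.exp 1 := by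
  linarith [Real.add_one_le_exp (1 : ℝ)]

lemma one_le_logWeight (x : E) : 1 ≤ logWeight x := by
  rw [logWeight, Real.le_log_iff_exp_le (by positivity)]
  linarith [norm_nonneg x]

lemma logWeight_pos (x : E) : 0 < logWeight x :=
  zero_lt_one.trans_le (one_le_logWeight x)

@[simp]
lemma logWeight_neg (x : E) : logWeight (-x) = logWeight x := by
  rw [logWeight, logWeight, norm_neg]

lemma continuous_logWeight : Continuous (logWeight : E → ℝ) :=
  (continuous_const.add continuous_norm).log fun x => (by positivity : 0 < Real.exp 1 + ‖x‖).ne'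

lemma logWeight_le_one_add_norm (x : E) : logWeight x ≤ 1 + ‖x‖ := by
  have h : Real.exp 1 + ‖x‖ ≤ Real.exp 1 * (1 + ‖x‖) := by
    nlinarith [two_le_exp_one, norm_nonneg x]
  calc logWeight x ≤ Real.log (Real.exp 1 * (1 + ‖x‖)) := Real.log_le_log (by positivity) h
    _ = 1 + Real.log (1 + ‖x‖) := by
      rw [Real.log_mul (by positivity) (by positivity), Real.log_exp]
    _ ≤ 1 + ‖x‖ := by linarith [Real.log_le_sub_one_of_pos (by positivity : 0 < 1 + ‖x‖)]

lemma logWeight_add_le (x y : E) : logWeight (x + y) ≤ logWeight x + logWeight y := by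
  have h : Real.exp 1 + ‖x + y‖ ≤ (Real.exp 1 + ‖x‖) * (Real.exp 1 + ‖y‖) := by
    nlinarith [two_le_exp_one, norm_add_le x y, norm_nonneg x, norm_nonneg y]
  calc logWeight (x + y) ≤ Real.log ((Real.exp 1 + ‖x‖) * (Real.exp 1 + ‖y‖)) :=
        Real.log_le_log (by positivity) h
    _ = logWeight x + logWeight y := Real.log_mul (by positivity) (by positivity)

lemma logWeight_add_le_two_mul (x y : E) : logWeight (x + y) ≤ 2 * logWeight x * logWeight y := by
  nlinarith [logWeight_add_le x y, one_le_logWeight x, one_le_logWeight y]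

lemma logWeight_le_two_mul_logWeight_add (x y : E) :
    logWeight y ≤ 2 * logWeight x * logWeight (x + y) := by
  simpa using logWeight_add_le_two_mul (-x) (x + y)

lemma logWeight_rpow_le_one_add_norm_pow (x : E) (s : ℝ) :
    logWeight x ^ s ≤ (1 + ‖x‖) ^ ⌈s⌉₊ :=
  calc logWeight x ^ s ≤ logWeight x ^ (⌈s⌉₊ : ℝ) :=
        Real.rpow_le_rpow_of_exponent_le (one_le_logWeight x) (Nat.le_ceil s)
    _ = logWeight x ^ ⌈s⌉₊ := Real.rpow_natCast _ _
    _ ≤ (1 + ‖x‖) ^ ⌈s⌉₊ :=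
        pow_le_pow_left₀ (logWeight_pos x).le (logWeight_le_one_add_norm x) _

lemma logWeight_add_rpow_le {lam : ℝ} (hlam : 0 ≤ lam) (x y : E) :
    logWeight (x + y) ^ lam ≤ logWeight y ^ lam * (2 * logWeight x) ^ lam := by
  rw [← Real.mul_rpow (logWeight_pos y).le (by linarith [logWeight_pos x])]
  exact Real.rpow_le_rpow (logWeight_pos _).le
    (by linarith [logWeight_add_le_two_mul x y]) hlam

lemma rpow_mul_rpow_neg_le_logWeight_add_rpow {lam : ℝ} (hlam : 0 ≤ lam) (x y : E) :
    logWeight y ^ lam * (2 * logWeight x) ^ (-lam) ≤ logWeight (x + y) ^ lam := by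
  have h2x : 0 < 2 * logWeight x := by linarith [logWeight_pos x]
  rw [Real.rpow_neg h2x.le, ← div_eq_mul_inv, ← Real.div_rpow (logWeight_pos y).le h2x.le]
  refine Real.rpow_le_rpow (div_pos (logWeight_pos y) h2x).le ?_ hlam
  rw [div_le_iff₀ h2x]
  linarith [logWeight_le_two_mul_logWeight_add x y]

lemma nat_le_logWeight_of_norm_eq_two_pow {x : E} {N : ℕ} (hx : ‖x‖ = 2 ^ (10 * N)) :
    (N : ℝ) ≤ logWeight x :=
  calc (N : ℝ) ≤ 10 * N * Real.log 2 := by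
        nlinarith [Real.log_two_gt_d9, (N.cast_nonneg : (0 : ℝ) ≤ N)]
    _ = Real.log ‖x‖ := by rw [hx, Real.log_pow]; push_cast; ring
    _ ≤ logWeight x := Real.log_le_log (by rw [hx]; positivity) (by linarith [Real.exp_pos 1])

lemma logWeight_le_eight_mul_of_norm_eq_two_pow {x : E} {N : ℕ} (hN : 1 ≤ N)
    (hx : ‖x‖ = 2 ^ (10 * N)) : logWeight x ≤ 8 * N := by
  have htwo : (2 : ℝ) ≤ ‖x‖ := by
    rw [hx]; exact le_self_pow₀ one_le_two (by omega)
  have hN' : (1 : ℝ) ≤ N := by exact_mod_cast hN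
  calc logWeight x ≤ Real.log (Real.exp 1 * ‖x‖) :=
        Real.log_le_log (by positivity) (by nlinarith [two_le_exp_one])
    _ = 1 + 10 * N * Real.log 2 := by
        rw [Real.log_mul (Real.exp_ne_zero 1) (by positivity), Real.log_exp, hx, Real.log_pow]
        push_cast; ring
    _ ≤ 8 * N := by nlinarith [Real.log_two_lt_d9]

end LogWeight

namespace SchwartzMap

variable {E F : Type*} [NormedAddCommGroup E] [NormedSpace ℝ E] [MeasurableSpace E]
  [BorelSpace E] [SecondCountableTopology E] [NormedAddCommGroup F] [NormedSpace ℝ F]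
  {μ : Measure E}

lemma integrable_norm_mul_logWeight_rpow [μ.HasTemperateGrowth] (f : 𝓢(E, F)) (s : ℝ) :
    Integrable (fun z => ‖f z‖ * logWeight z ^ s) μ := by
  set k := ⌈s⌉₊
  have hdom : Integrable (fun z => 2 ^ (k - 1) * (‖z‖ ^ 0 * ‖f z‖ + ‖z‖ ^ k * ‖f z‖)) μ :=
    ((f.integrable_pow_mul μ 0).add (f.integrable_pow_mul μ k)).const_mul _
  refine hdom.mono' (f.continuous.norm.mul (continuous_logWeight.rpow_const
    fun z => Or.inl (logWeight_pos z).ne')).aestronglyMeasurable (ae_of_all _ fun z => ?_)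
  rw [Real.norm_of_nonneg (mul_nonneg (norm_nonneg _) (Real.rpow_nonneg (logWeight_pos z).le s))]
  calc ‖f z‖ * logWeight z ^ s ≤ ‖f z‖ * (2 ^ (k - 1) * (1 ^ k + ‖z‖ ^ k)) := by
        gcongr
        exact (logWeight_rpow_le_one_add_norm_pow z s).trans
          (add_pow_le zero_le_one (norm_nonneg z) k)
    _ = _ := by ring

lemma integrable_norm_mul_two_mul_logWeight_rpow [μ.HasTemperateGrowth] (f : 𝓢(E, F)) (s : ℝ) :
    Integrable (fun z => ‖f z‖ * (2 * logWeight z) ^ s) μ := by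
  refine ((f.integrable_norm_mul_logWeight_rpow s).const_mul (2 ^ s)).congr
    (ae_of_all _ fun z => ?_)
  simp only [Real.mul_rpow zero_le_two (logWeight_pos z).le]
  ring

lemma integral_norm_mul_two_mul_logWeight_rpow_pos [μ.HasTemperateGrowth] [μ.IsOpenPosMeasure]
    (f : 𝓢(E, F)) (hf : ∃ x, f x ≠ 0) (s : ℝ) :
    0 < ∫ z, ‖f z‖ * (2 * logWeight z) ^ s ∂μ := by
  obtain ⟨x, hx⟩ := hf
  have hw : ∀ z : E, 0 < (2 * logWeight z) ^ s := fun z =>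
    Real.rpow_pos_of_pos (mul_pos two_pos (logWeight_pos z)) s
  refine integral_pos_of_integrable_nonneg_nonzero (x := x) ?_
    (f.integrable_norm_mul_two_mul_logWeight_rpow s)
    (fun z => mul_nonneg (norm_nonneg _) (hw z).le) (mul_ne_zero (norm_ne_zero_iff.2 hx) (hw x).ne')
  exact f.continuous.norm.mul ((continuous_const.mul continuous_logWeight).rpow_const
    fun z => Or.inl (mul_pos two_pos (logWeight_pos z)).ne')

lemma integral_norm_mul_logWeight_add_rpow_le [μ.HasTemperateGrowth] (f : 𝓢(E, F)) {lam : ℝ}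
    (hlam : 0 ≤ lam) (v : E) :
    ∫ z, ‖f z‖ * logWeight (z + v) ^ lam ∂μ ≤
      logWeight v ^ lam * ∫ z, ‖f z‖ * (2 * logWeight z) ^ lam ∂μ := by
  rw [← integral_const_mul]
  refine integral_mono_of_nonneg (ae_of_all _ fun z => ?_)
    ((f.integrable_norm_mul_two_mul_logWeight_rpow lam).const_mul _) (ae_of_all _ fun z => ?_)
  · exact mul_nonneg (norm_nonneg _) (Real.rpow_nonneg (logWeight_pos _).le _)
  · calc ‖f z‖ * logWeight (z + v) ^ lam
        ≤ ‖f z‖ * (logWeight v ^ lam * (2 * logWeight z) ^ lam) := by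
          gcongr; exact logWeight_add_rpow_le hlam z v
      _ = _ := by ring

lemma integrable_norm_mul_logWeight_add_rpow [μ.HasTemperateGrowth] (f : 𝓢(E, F)) {lam : ℝ}
    (hlam : 0 ≤ lam) (v : E) :
    Integrable (fun z => ‖f z‖ * logWeight (z + v) ^ lam) μ := by
  refine ((f.integrable_norm_mul_two_mul_logWeight_rpow lam).const_mul (logWeight v ^ lam)).mono'
    (f.continuous.norm.mul (((continuous_logWeight.comp (continuous_add_const v))).rpow_const
      fun z => Or.inl (logWeight_pos _).ne')).aestronglyMeasurable (ae_of_all _ fun z => ?_)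
  rw [Real.norm_of_nonneg (mul_nonneg (norm_nonneg _) (Real.rpow_nonneg (logWeight_pos _).le _))]
  calc ‖f z‖ * logWeight (z + v) ^ lam
      ≤ ‖f z‖ * (logWeight v ^ lam * (2 * logWeight z) ^ lam) := by
        gcongr; exact logWeight_add_rpow_le hlam z v
    _ = _ := by ring

lemma le_integral_norm_mul_logWeight_add_rpow [μ.HasTemperateGrowth] (f : 𝓢(E, F)) {lam : ℝ}
    (hlam : 0 ≤ lam) (v : E) :
    logWeight v ^ lam * ∫ z, ‖f z‖ * (2 * logWeight z) ^ (-lam) ∂μ ≤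
      ∫ z, ‖f z‖ * logWeight (z + v) ^ lam ∂μ := by
  rw [← integral_const_mul]
  refine integral_mono ((f.integrable_norm_mul_two_mul_logWeight_rpow (-lam)).const_mul _)
    (f.integrable_norm_mul_logWeight_add_rpow hlam v) fun z => ?_
  calc logWeight v ^ lam * (‖f z‖ * (2 * logWeight z) ^ (-lam))
      = ‖f z‖ * (logWeight v ^ lam * (2 * logWeight z) ^ (-lam)) := by ring
    _ ≤ ‖f z‖ * logWeight (z + v) ^ lam := by
        gcongr; exact rpow_mul_rpow_neg_le_logWeight_add_rpow hlam z v

theorem exists_integral_norm_comp_sub_mul_logWeight_rpow_comparable [μ.HasTemperateGrowth]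
    [μ.IsAddRightInvariant] [μ.IsOpenPosMeasure] (f : 𝓢(E, F)) (hf : ∃ x, f x ≠ 0) {lam : ℝ}
    (hlam : 0 ≤ lam) :
    ∃ C > 0, ∀ v : E,
      C⁻¹ * logWeight v ^ lam ≤ ∫ y, ‖f (y - v)‖ * logWeight y ^ lam ∂μ ∧
        ∫ y, ‖f (y - v)‖ * logWeight y ^ lam ∂μ ≤ C * logWeight v ^ lam := by
  set A := ∫ z, ‖f z‖ * (2 * logWeight z) ^ (-lam) ∂μ
  set B := ∫ z, ‖f z‖ * (2 * logWeight z) ^ lam ∂μ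
  have hA : 0 < A := f.integral_norm_mul_two_mul_logWeight_rpow_pos hf (-lam)
  refine ⟨max A⁻¹ B, lt_max_of_lt_left (inv_pos.2 hA), fun v => ?_⟩
  have htranslate : ∫ y, ‖f (y - v)‖ * logWeight y ^ lam ∂μ =
      ∫ z, ‖f z‖ * logWeight (z + v) ^ lam ∂μ := by
    simpa using integral_sub_right_eq_self (fun z => ‖f z‖ * logWeight (z + v) ^ lam) v (μ := μ)
  have hw : 0 ≤ logWeight v ^ lam := Real.rpow_nonneg (logWeight_pos v).le lam
  rw [htranslate]
  constructor
  · calc (max A⁻¹ B)⁻¹ * logWeight v ^ lam ≤ A * logWeight v ^ lam := by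
          gcongr; exact inv_le_of_inv_le₀ hA (le_max_left _ _)
      _ ≤ _ := by rw [mul_comm]; exact f.le_integral_norm_mul_logWeight_add_rpow hlam v
  · calc _ ≤ logWeight v ^ lam * B := f.integral_norm_mul_logWeight_add_rpow_le hlam v
      _ ≤ max A⁻¹ B * logWeight v ^ lam := by rw [mul_comm]; gcongr; exact le_max_right _ _

end SchwartzMap

theorem stmt10_general (n : ℕ) (hn : 0 < n) (lam : ℝ) (hlam : 0 ≤ lam)
    (β : SchwartzMap (EuclideanSpace ℝ (Fin n)) ℂ) (hβne : ∃ x, β x ≠ 0) :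
    ∃ C : ℝ, 0 < C ∧
      ∀ N : ℕ, 1 ≤ N →
        C⁻¹ * (N : ℝ) ^ lam ≤
          (∫ y : EuclideanSpace ℝ (Fin n),
            ‖β (y - (2 : ℝ) ^ (10 * N) • EuclideanSpace.single (⟨0, hn⟩ : Fin n) (1 : ℝ))‖ *
              (Real.log (Real.exp 1 + ‖y‖)) ^ lam) ∧
        (∫ y : EuclideanSpace ℝ (Fin n),
            ‖β (y - (2 : ℝ) ^ (10 * N) • EuclideanSpace.single (⟨0, hn⟩ : Fin n) (1 : ℝ))‖ *
              (Real.log (Real.exp 1 + ‖y‖)) ^ lam) ≤ C * (N : ℝ) ^ lam := by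
  obtain ⟨C, hC, hcomp⟩ :=
    β.exists_integral_norm_comp_sub_mul_logWeight_rpow_comparable (μ := volume) hβne hlam
  have h8 : 1 ≤ (8 : ℝ) ^ lam := Real.one_le_rpow (by norm_num) hlam
  refine ⟨8 ^ lam * C, by positivity, fun N hN => ?_⟩
  set v := (2 : ℝ) ^ (10 * N) • EuclideanSpace.single (⟨0, hn⟩ : Fin n) (1 : ℝ)
  have hv : ‖v‖ = 2 ^ (10 * N) := by simp [v, norm_smul]
  have hlower : (N : ℝ) ^ lam ≤ logWeight v ^ lam :=
    Real.rpow_le_rpow N.cast_nonneg (nat_le_logWeight_of_norm_eq_two_pow hv) hlam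
  have hupper : logWeight v ^ lam ≤ 8 ^ lam * (N : ℝ) ^ lam := by
    rw [← Real.mul_rpow (by norm_num) N.cast_nonneg]
    exact Real.rpow_le_rpow (logWeight_pos v).le
      (logWeight_le_eight_mul_of_norm_eq_two_pow hN hv) hlam
  obtain ⟨hD_lower, hD_upper⟩ := hcomp v
  constructor
  · calc (8 ^ lam * C)⁻¹ * (N : ℝ) ^ lam ≤ C⁻¹ * logWeight v ^ lam := by
          gcongr; exact le_mul_of_one_le_left hC.le h8
      _ ≤ _ := hD_lower
  · calc _ ≤ C * logWeight v ^ lam := hD_upper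
      _ ≤ C * (8 ^ lam * (N : ℝ) ^ lam) := by gcongr
      _ = 8 ^ lam * C * (N : ℝ) ^ lam := by ring

/-- For a nontrivial Schwartz `β` with `𝓕β` supported in
`{10/11 ≤ |ξ| ≤ 11/10}` and `K(y) = β(y − 2^{10N}e₁)`, the quantity
`D_λ(K) = ∫ |K(y)|(log(e+|y|))^λ dy` is comparable to `N^λ`, uniformly in `N ≥ 1`. -/
theorem stmt10 (n : ℕ) (hn : 0 < n) (lam : ℝ) (hlam : 0 ≤ lam)
    (β : SchwartzMap (EuclideanSpace ℝ (Fin n)) ℂ) (hβne : ∃ x, β x ≠ 0)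
    (hsupp : ∀ ξ : EuclideanSpace ℝ (Fin n),
      𝓕 (β : EuclideanSpace ℝ (Fin n) → ℂ) ξ ≠ 0 → 10 / 11 ≤ ‖ξ‖ ∧ ‖ξ‖ ≤ 11 / 10) :
    ∃ C : ℝ, 0 < C ∧
      ∀ N : ℕ, 1 ≤ N →
        C⁻¹ * (N : ℝ) ^ lam ≤
          (∫ y : EuclideanSpace ℝ (Fin n),
            ‖β (y - (2 : ℝ) ^ (10 * N) • EuclideanSpace.single (⟨0, hn⟩ : Fin n) (1 : ℝ))‖ *
              (Real.log (Real.exp 1 + ‖y‖)) ^ lam) ∧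
        (∫ y : EuclideanSpace ℝ (Fin n),
            ‖β (y - (2 : ℝ) ^ (10 * N) • EuclideanSpace.single (⟨0, hn⟩ : Fin n) (1 : ℝ))‖ *
              (Real.log (Real.exp 1 + ‖y‖)) ^ lam) ≤ C * (N : ℝ) ^ lam :=
  stmt10_general n hn lam hlam β hβne
end

section
/- Let N ∈ N, ζ_k = 10k, and let η be a Schwartz function on R^n with supp(η̂) ⊂ {|ξ| ≤ 1/100}. Define f(x) = Σ_{k=1}^N η(x + 2^{ζ_N − ζ_k} e_1) e^{2πi⟨x, 2^{ζ_k} e_1⟩} and g(x) = Σ_{k=1}^N η(x + 2^{ζ_N − ζ_k} e_1) e^{−2πi⟨x, 2^{ζ_k} e_1⟩}. Let K(y_1,y_2) = β(y_1 − 2^{ζ_N}e_1)β(y_2 − 2^{ζ_N}e_1) with β radial Schwartz, supp(β̂) ⊂ {10/11 ≤ |ξ| ≤ 11/10}, β̂ = 1 on {20/21 ≤ |ξ| ≤ 21/20}. Then the bilinear operator B(f,g)(x) = Σ_{l∈Z} ∫∫ K̂(2^{-l}ξ_1, 2^{-l}ξ_2) f̂(ξ_1) ĝ(ξ_2) e^{2πi⟨x,ξ_1+ξ_2⟩}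 dξ_1 dξ_2 satisfies B(f,g)(x) = N·(η(x))² for all x ∈ R^n. -/
/-!
Each summand of `f` (resp. `g`) is a wave packet `η(· + aₖ)` modulated by the frequency
`±bₖ = ±2^{10(k+1)} e₁`, so its Fourier transform lives in the ball of radius `1/100` about `±bₖ`.
On that ball the dilated cutoff `β̂(2^{-l} ·)` is `1` for `l = 10(k+1)` and `0` for every other `l`,
and for `l = 10(k+1)` the phase of `K̂` (from the translation by `2^{10N} e₁ = 2^{l} aₖ`) cancels
the phase of the packet up to the integer `⟪aₖ, bₖ⟫`. Since `K̂` is a tensor product, the `l`-th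
term of `B(f,g)(x)` therefore splits into two Fourier inversions, giving `η(x) e^{2πi⟨x,bₖ⟩}` and
`η(x) e^{-2πi⟨x,bₖ⟩}` for the unique `k` with `10(k+1) = l`; summing over `l` gives `N η(x)²`.
-/

open MeasureTheory Metric
open scoped ENNReal NNReal FourierTransform SchwartzMap RealInnerProductSpace

noncomputable section Stmt13

/-- The first standard basis vector of `ℝ^n`. -/
def stmt13e1 (n : ℕ) (hn : 0 < n) : EuclideanSpace ℝ (Fin n) :=
  EuclideanSpace.single (⟨0, hn⟩ : Fin n) (1 : ℝ)

/-- `f(x) = ∑_{k=1}^N η(x + 2^{ζ_N−ζ_k}e₁) e^{2πi⟨x, 2^{ζ_k}e₁⟩}`, with `ζ_k = 10k`. -/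
def stmt13f (n N : ℕ) (hn : 0 < n) (η : SchwartzMap (EuclideanSpace ℝ (Fin n)) ℂ)
    (x : EuclideanSpace ℝ (Fin n)) : ℂ :=
  ∑ k ∈ Finset.range N,
    η (x + (2 : ℝ) ^ (10 * (N - (k + 1))) • stmt13e1 n hn) *
      Complex.exp (2 * (Real.pi : ℂ) * Complex.I *
        ((⟪x, (2 : ℝ) ^ (10 * (k + 1)) • stmt13e1 n hn⟫ : ℝ) : ℂ))

/-- `g(x) = ∑_{k=1}^N η(x + 2^{ζ_N−ζ_k}e₁) e^{−2πi⟨x, 2^{ζ_k}e₁⟩}`. -/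
def stmt13g (n N : ℕ) (hn : 0 < n) (η : SchwartzMap (EuclideanSpace ℝ (Fin n)) ℂ)
    (x : EuclideanSpace ℝ (Fin n)) : ℂ :=
  ∑ k ∈ Finset.range N,
    η (x + (2 : ℝ) ^ (10 * (N - (k + 1))) • stmt13e1 n hn) *
      Complex.exp (-(2 * (Real.pi : ℂ) * Complex.I *
        ((⟪x, (2 : ℝ) ^ (10 * (k + 1)) • stmt13e1 n hn⟫ : ℝ) : ℂ)))

/-- The Fourier transform (in `ℝ^n`) of the translate `y ↦ β(y − 2^{ζ_N}e₁)`; since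
`K(y₁,y₂) = β(y₁−2^{ζ_N}e₁)β(y₂−2^{ζ_N}e₁)` is a tensor product, its `2n`-dimensional
Fourier transform is `K̂(ξ₁,ξ₂) = stmt13Khat₁(ξ₁) · stmt13Khat₁(ξ₂)`. -/
def stmt13Khat1 (n N : ℕ) (hn : 0 < n) (β : SchwartzMap (EuclideanSpace ℝ (Fin n)) ℂ)
    (ξ : EuclideanSpace ℝ (Fin n)) : ℂ :=
  𝓕 (fun y : EuclideanSpace ℝ (Fin n) => β (y - (2 : ℝ) ^ (10 * N) • stmt13e1 n hn)) ξ

lemma cexp_two_pi_I_mul (r : ℝ) :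
    Complex.exp (2 * (Real.pi : ℂ) * Complex.I * r) = 𝐞 r := by
  rw [Real.fourierChar_apply]
  push_cast
  ring_nf

lemma fourierChar_intCast (z : ℤ) : 𝐞 (z : ℝ) = 1 := by
  rw [Real.fourierChar_apply', Circle.exp_two_pi_mul_int]

lemma tsum_sum_ite_mul_sum_ite {ι : Type*} (s : Finset ι) {m : ι → ℤ} (hm : Set.InjOn m s)
    (u v : ι → ℂ) :
    ∑' l : ℤ, (∑ i ∈ s, if l = m i then u i else 0) * (∑ i ∈ s, if l = m i then v i else 0) =
      ∑ i ∈ s, u i * v i := by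
  have hsingle : ∀ (w : ι → ℂ), ∀ i ∈ s, (∑ j ∈ s, if m i = m j then w j else 0) = w i :=
    fun w i hi ↦ by
      rw [Finset.sum_eq_single_of_mem i hi fun j hj hji ↦ if_neg fun h ↦ hji (hm hj hi h.symm),
        if_pos rfl]
  rw [tsum_eq_sum (s := s.image m) fun l hl ↦ ?_, Finset.sum_image fun i hi j hj h ↦ hm hi hj h]
  · exact Finset.sum_congr rfl fun i hi ↦ by rw [hsingle u i hi, hsingle v i hi]
  · have hne : ∀ i ∈ s, l ≠ m i := fun i hi h ↦ hl (Finset.mem_image.mpr ⟨i, hi, h.symm⟩)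
    rw [Finset.sum_eq_zero fun i hi ↦ if_neg (hne i hi), zero_mul]

section Rescaling

variable {V : Type*} [NormedAddCommGroup V] [NormedSpace ℝ V] {φ : V → ℂ}

lemma apply_two_zpow_neg_smul_eq_ite
    (hφs : ∀ ξ : V, φ ξ ≠ 0 → 10 / 11 ≤ ‖ξ‖ ∧ ‖ξ‖ ≤ 11 / 10)
    (hφ1 : ∀ ξ : V, 20 / 21 ≤ ‖ξ‖ → ‖ξ‖ ≤ 21 / 20 → φ ξ = 1)
    {m : ℕ} {ξ b : V} (hb : ‖b‖ = 2 ^ m) (hξ : ‖ξ - b‖ ≤ 1 / 100) (l : ℤ) :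
    φ ((2 : ℝ) ^ (-l) • ξ) = if l = m then 1 else 0 := by
  have hT : (1 : ℝ) ≤ 2 ^ m := one_le_pow₀ one_le_two
  obtain ⟨s, hξs⟩ : ∃ s : ℝ, ‖ξ‖ = 2 ^ m * s := ⟨‖ξ‖ / 2 ^ m, by field_simp⟩
  obtain ⟨hlo, hhi⟩ := abs_le.mp ((abs_norm_sub_norm_le ξ b).trans hξ)
  rw [hb, hξs] at hlo hhi
  have hs1 : 99 / 100 ≤ s := by nlinarith
  have hs2 : s ≤ 101 / 100 := by nlinarith
  have hnorm : ‖(2 : ℝ) ^ (-l) • ξ‖ = 2 ^ ((m : ℤ) - l) * s := by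
    rw [norm_smul, Real.norm_eq_abs, abs_of_pos (by positivity), hξs, zpow_sub₀ two_ne_zero,
      zpow_neg, zpow_natCast]
    field_simp
  split_ifs with hl
  · subst hl
    rw [sub_self, zpow_zero, one_mul] at hnorm
    exact hφ1 _ (by rw [hnorm]; linarith) (by rw [hnorm]; linarith)
  · by_contra hne
    obtain ⟨h1, h2⟩ := hφs _ hne
    rw [hnorm] at h1 h2
    rcases Ne.lt_or_gt hl with hlt | hgt
    · have : (2 : ℝ) ^ (1 : ℤ) ≤ 2 ^ ((m : ℤ) - l) := zpow_le_zpow_right₀ one_le_two (by omega)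
      rw [zpow_one] at this
      nlinarith
    · have : (2 : ℝ) ^ ((m : ℤ) - l) ≤ 2 ^ (-1 : ℤ) := zpow_le_zpow_right₀ one_le_two (by omega)
      rw [zpow_neg_one] at this
      nlinarith

end Rescaling

section WavePacket

variable {V : Type*} [NormedAddCommGroup V] [InnerProductSpace ℝ V] [FiniteDimensional ℝ V]
  [MeasurableSpace V] [BorelSpace V]

lemma fourier_comp_add_right (f : V → ℂ) (a ξ : V) :
    𝓕 (fun y ↦ f (y + a)) ξ = 𝐞 ⟪a, ξ⟫ * 𝓕 f ξ :=
  congr_fun (VectorFourier.fourierIntegral_comp_add_right 𝐞 volume (innerₗ V) f a) ξ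

lemma fourier_mul_fourierChar_inner (f : V → ℂ) (b ξ : V) :
    𝓕 (fun y ↦ f y * 𝐞 ⟪y, b⟫) ξ = 𝓕 f (ξ - b) := by
  simp only [Real.fourier_eq, Circle.smul_def, smul_eq_mul]
  congr 1 with y
  rw [inner_sub_right, neg_sub, sub_eq_neg_add, AddChar.map_add_eq_mul, Circle.coe_mul]
  ring

lemma integrable_mul_fourierChar_inner {h : V → ℂ} (hh : Integrable h) (w : V) :
    Integrable (fun y ↦ h y * 𝐞 ⟪y, w⟫) := by
  simpa [Circle.smul_def, inner_neg_right, mul_comm] using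
    (Real.fourierIntegral_convergent_iff (-w)).2 hh

lemma fourier_finsetSum {ι : Type*} (s : Finset ι) {f : ι → V → ℂ}
    (hf : ∀ i ∈ s, Integrable (f i)) (ξ : V) :
    𝓕 (∑ i ∈ s, f i) ξ = ∑ i ∈ s, 𝓕 (f i) ξ := by
  simp only [Real.fourier_eq, Finset.sum_apply, Finset.smul_sum]
  exact integral_finsetSum s fun i hi ↦ (Real.fourierIntegral_convergent_iff ξ).2 (hf i hi)

lemma integral_fourier_sub_mul_fourierChar (h : 𝓢(V, ℂ)) (b x : V) :
    ∫ ξ, 𝓕 (h : V → ℂ) (ξ - b) * 𝐞 ⟪ξ, x⟫ = h x * 𝐞 ⟪x, b⟫ := by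
  set g : V → ℂ := fun y ↦ h y * 𝐞 ⟪y, b⟫
  have hgh : 𝓕 g = fun ξ ↦ 𝓕 (h : V → ℂ) (ξ - b) := funext (fourier_mul_fourierChar_inner h b)
  have hinv : 𝓕⁻ (𝓕 g) = g :=
    (h.continuous.mul (by fun_prop)).fourierInv_fourier_eq
      (integrable_mul_fourierChar_inner h.integrable b)
      (hgh ▸ (𝓕 h).integrable.comp_sub_right b)
  have := congr_fun hinv x
  rw [Real.fourierInv_eq, hgh] at this
  simpa [Circle.smul_def, mul_comm] using this

def wavePacket (η : V → ℂ) (a b : V) (y : V) : ℂ := η (y + a) * 𝐞 ⟪y, b⟫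

lemma fourier_wavePacket (η : V → ℂ) (a b ξ : V) :
    𝓕 (wavePacket η a b) ξ = 𝐞 ⟪a, ξ - b⟫ * 𝓕 η (ξ - b) := by
  rw [← fourier_comp_add_right, ← fourier_mul_fourierChar_inner]
  rfl

lemma integrable_wavePacket (η : 𝓢(V, ℂ)) (a b : V) : Integrable (wavePacket η a b) :=
  integrable_mul_fourierChar_inner (η.integrable.comp_add_right a) b

lemma fourier_translate_rescale_mul_fourier_wavePacket (η : V → ℂ) {β : V → ℂ}
    (hη : ∀ ξ : V, 𝓕 η ξ ≠ 0 → ‖ξ‖ ≤ 1 / 100)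
    (hβs : ∀ ξ : V, 𝓕 β ξ ≠ 0 → 10 / 11 ≤ ‖ξ‖ ∧ ‖ξ‖ ≤ 11 / 10)
    (hβ1 : ∀ ξ : V, 20 / 21 ≤ ‖ξ‖ → ‖ξ‖ ≤ 21 / 20 → 𝓕 β ξ = 1)
    {c a b : V} {m : ℕ} (hb : ‖b‖ = 2 ^ m) (hca : (2 : ℝ) ^ (-(m : ℤ)) • c = a)
    (hab : ∃ z : ℤ, ⟪a, b⟫ = z) (l : ℤ) (ξ : V) :
    𝓕 (fun y ↦ β (y - c)) ((2 : ℝ) ^ (-l) • ξ) * 𝓕 (wavePacket η a b) ξ =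
      if l = m then 𝓕 η (ξ - b) else 0 := by
  by_cases h0 : 𝓕 η (ξ - b) = 0
  · simp [fourier_wavePacket, h0]
  simp only [sub_eq_add_neg _ c, fourier_comp_add_right, fourier_wavePacket,
    apply_two_zpow_neg_smul_eq_ite hβs hβ1 hb (hη _ h0) l]
  split_ifs with hl
  · obtain ⟨z, hz⟩ := hab
    have hphase : ⟪-c, (2 : ℝ) ^ (-l) • ξ⟫ + ⟪a, ξ - b⟫ = ((-z : ℤ) : ℝ) := by
      rw [inner_neg_left, real_inner_smul_right, ← real_inner_smul_left, hl, hca, inner_sub_right,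
        hz]
      push_cast
      ring
    rw [mul_one, ← mul_assoc, ← Circle.coe_mul, ← AddChar.map_add_eq_mul, hphase,
      fourierChar_intCast, Circle.coe_one, one_mul]
  · rw [mul_zero, zero_mul]

lemma integral_translate_rescale_mul_fourier_sum_wavePacket {ι : Type*} (s : Finset ι)
    (η : 𝓢(V, ℂ)) {β : V → ℂ}
    (hη : ∀ ξ : V, 𝓕 (η : V → ℂ) ξ ≠ 0 → ‖ξ‖ ≤ 1 / 100)
    (hβs : ∀ ξ : V, 𝓕 β ξ ≠ 0 → 10 / 11 ≤ ‖ξ‖ ∧ ‖ξ‖ ≤ 11 / 10)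
    (hβ1 : ∀ ξ : V, 20 / 21 ≤ ‖ξ‖ → ‖ξ‖ ≤ 21 / 20 → 𝓕 β ξ = 1)
    {c : V} {a b : ι → V} {m : ι → ℕ} (hb : ∀ i ∈ s, ‖b i‖ = 2 ^ m i)
    (hca : ∀ i ∈ s, (2 : ℝ) ^ (-(m i : ℤ)) • c = a i)
    (hab : ∀ i ∈ s, ∃ z : ℤ, ⟪a i, b i⟫ = z) (l : ℤ) (x : V) :
    ∫ ξ, 𝓕 (fun y ↦ β (y - c)) ((2 : ℝ) ^ (-l) • ξ) *
        𝓕 (∑ i ∈ s, wavePacket η (a i) (b i)) ξ * 𝐞 ⟪ξ, x⟫ =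
      ∑ i ∈ s, if l = m i then η x * 𝐞 ⟪x, b i⟫ else 0 := by
  have hpoint : ∀ ξ, 𝓕 (fun y ↦ β (y - c)) ((2 : ℝ) ^ (-l) • ξ) *
      𝓕 (∑ i ∈ s, wavePacket η (a i) (b i)) ξ * 𝐞 ⟪ξ, x⟫ =
        ∑ i ∈ s, if l = m i then 𝓕 (η : V → ℂ) (ξ - b i) * 𝐞 ⟪ξ, x⟫ else 0 := fun ξ ↦ by
    rw [fourier_finsetSum s (fun i _ ↦ integrable_wavePacket η _ _), Finset.mul_sum,
      Finset.sum_mul]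
    refine Finset.sum_congr rfl fun i hi ↦ ?_
    rw [fourier_translate_rescale_mul_fourier_wavePacket η hη hβs hβ1 (hb i hi) (hca i hi)
      (hab i hi), ite_mul, zero_mul]
  have hint : ∀ i ∈ s, Integrable fun ξ ↦
      if l = m i then 𝓕 (η : V → ℂ) (ξ - b i) * 𝐞 ⟪ξ, x⟫ else 0 := fun i _ ↦ by
    split_ifs
    · exact integrable_mul_fourierChar_inner ((𝓕 η).integrable.comp_sub_right _) x
    · exact integrable_zero _ _ _
  simp_rw [hpoint]
  rw [integral_finsetSum s hint]
  refine Finset.sum_congr rfl fun i _ ↦ ?_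
  split_ifs
  · exact integral_fourier_sub_mul_fourierChar η (b i) x
  · exact integral_zero _ _

end WavePacket

section Factorization

variable {V : Type*} [NormedAddCommGroup V] [InnerProductSpace ℝ V] [MeasureSpace V]

lemma integral_integral_mul_cexp_inner_add (P Q R S : V → ℂ) (x : V) :
    ∫ ξ₁, ∫ ξ₂, P ξ₁ * Q ξ₂ * R ξ₁ * S ξ₂ *
        Complex.exp (2 * (Real.pi : ℂ) * Complex.I * ((⟪x, ξ₁ + ξ₂⟫ : ℝ) : ℂ)) =
      (∫ ξ, P ξ * R ξ * 𝐞 ⟪ξ, x⟫) * ∫ ξ, Q ξ * S ξ * 𝐞 ⟪ξ, x⟫ := by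
  simp_rw [← integral_mul_const, ← integral_const_mul, cexp_two_pi_I_mul, inner_add_right,
    AddChar.map_add_eq_mul, Circle.coe_mul, real_inner_comm x]
  congr 1 with ξ₁
  congr 1 with ξ₂
  ring

end Factorization

section Configuration

variable {n : ℕ} (hn : 0 < n)

lemma norm_two_pow_smul_stmt13e1 (j : ℕ) : ‖(2 : ℝ) ^ j • stmt13e1 n hn‖ = 2 ^ j := by
  simp [norm_smul, stmt13e1]

lemma inner_two_pow_smul_stmt13e1 (i j : ℕ) :
    ⟪(2 : ℝ) ^ i • stmt13e1 n hn, (2 : ℝ) ^ j • stmt13e1 n hn⟫ = ((2 ^ (i + j) : ℕ) : ℤ) := by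
  simp [real_inner_smul_left, real_inner_smul_right, stmt13e1, pow_add, mul_comm]

lemma stmt13f_eq_sum_wavePacket (N : ℕ) (η : 𝓢(EuclideanSpace ℝ (Fin n), ℂ)) :
    stmt13f n N hn η = ∑ k ∈ Finset.range N, wavePacket η
      ((2 : ℝ) ^ (10 * (N - (k + 1))) • stmt13e1 n hn)
      ((2 : ℝ) ^ (10 * (k + 1)) • stmt13e1 n hn) := by
  ext x
  simp only [stmt13f, wavePacket, Finset.sum_apply, cexp_two_pi_I_mul]

lemma stmt13g_eq_sum_wavePacket (N : ℕ) (η : 𝓢(EuclideanSpace ℝ (Fin n), ℂ)) :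
    stmt13g n N hn η = ∑ k ∈ Finset.range N, wavePacket η
      ((2 : ℝ) ^ (10 * (N - (k + 1))) • stmt13e1 n hn)
      (-((2 : ℝ) ^ (10 * (k + 1)) • stmt13e1 n hn)) := by
  ext x
  simp only [stmt13g, wavePacket, Finset.sum_apply, ← mul_neg, ← Complex.ofReal_neg,
    cexp_two_pi_I_mul, ← inner_neg_right]

lemma two_zpow_neg_smul_stmt13e1 {N k : ℕ} (hk : k ∈ Finset.range N) :
    (2 : ℝ) ^ (-((10 * (k + 1) : ℕ) : ℤ)) • (2 : ℝ) ^ (10 * N) • stmt13e1 n hn =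
      (2 : ℝ) ^ (10 * (N - (k + 1))) • stmt13e1 n hn := by
  have hkN : 10 * (k + 1) ≤ 10 * N := by rw [Finset.mem_range] at hk; omega
  rw [smul_smul, zpow_neg, zpow_natCast, Nat.mul_sub, pow_sub₀ _ two_ne_zero hkN, mul_comm]

variable {N : ℕ} {η β : 𝓢(EuclideanSpace ℝ (Fin n), ℂ)}

lemma integral_stmt13Khat1_mul_fourier_stmt13f
    (hη : ∀ ξ : EuclideanSpace ℝ (Fin n), 𝓕 (η : EuclideanSpace ℝ (Fin n) → ℂ) ξ ≠ 0 →
      ‖ξ‖ ≤ 1 / 100)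
    (hβs : ∀ ξ : EuclideanSpace ℝ (Fin n),
      𝓕 (β : EuclideanSpace ℝ (Fin n) → ℂ) ξ ≠ 0 → 10 / 11 ≤ ‖ξ‖ ∧ ‖ξ‖ ≤ 11 / 10)
    (hβ1 : ∀ ξ : EuclideanSpace ℝ (Fin n),
      20 / 21 ≤ ‖ξ‖ → ‖ξ‖ ≤ 21 / 20 → 𝓕 (β : EuclideanSpace ℝ (Fin n) → ℂ) ξ = 1)
    (l : ℤ) (x : EuclideanSpace ℝ (Fin n)) :
    ∫ ξ, stmt13Khat1 n N hn β ((2 : ℝ) ^ (-l) • ξ) * 𝓕 (stmt13f n N hn η) ξ * 𝐞 ⟪ξ, x⟫ =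
      ∑ k ∈ Finset.range N, if l = ((10 * (k + 1) : ℕ) : ℤ)
        then η x * 𝐞 ⟪x, (2 : ℝ) ^ (10 * (k + 1)) • stmt13e1 n hn⟫ else 0 := by
  rw [stmt13f_eq_sum_wavePacket]
  exact integral_translate_rescale_mul_fourier_sum_wavePacket _ η hη hβs hβ1
    (fun k _ ↦ norm_two_pow_smul_stmt13e1 hn _) (fun k hk ↦ two_zpow_neg_smul_stmt13e1 hn hk)
    (fun k _ ↦ ⟨_, inner_two_pow_smul_stmt13e1 hn _ _⟩) l x

lemma integral_stmt13Khat1_mul_fourier_stmt13g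
    (hη : ∀ ξ : EuclideanSpace ℝ (Fin n), 𝓕 (η : EuclideanSpace ℝ (Fin n) → ℂ) ξ ≠ 0 →
      ‖ξ‖ ≤ 1 / 100)
    (hβs : ∀ ξ : EuclideanSpace ℝ (Fin n),
      𝓕 (β : EuclideanSpace ℝ (Fin n) → ℂ) ξ ≠ 0 → 10 / 11 ≤ ‖ξ‖ ∧ ‖ξ‖ ≤ 11 / 10)
    (hβ1 : ∀ ξ : EuclideanSpace ℝ (Fin n),
      20 / 21 ≤ ‖ξ‖ → ‖ξ‖ ≤ 21 / 20 → 𝓕 (β : EuclideanSpace ℝ (Fin n) → ℂ) ξ = 1)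
    (l : ℤ) (x : EuclideanSpace ℝ (Fin n)) :
    ∫ ξ, stmt13Khat1 n N hn β ((2 : ℝ) ^ (-l) • ξ) * 𝓕 (stmt13g n N hn η) ξ * 𝐞 ⟪ξ, x⟫ =
      ∑ k ∈ Finset.range N, if l = ((10 * (k + 1) : ℕ) : ℤ)
        then η x * 𝐞 ⟪x, -((2 : ℝ) ^ (10 * (k + 1)) • stmt13e1 n hn)⟫ else 0 := by
  rw [stmt13g_eq_sum_wavePacket]
  exact integral_translate_rescale_mul_fourier_sum_wavePacket _ η hη hβs hβ1
    (fun k _ ↦ (norm_neg _).trans (norm_two_pow_smul_stmt13e1 hn _))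
    (fun k hk ↦ two_zpow_neg_smul_stmt13e1 hn hk)
    (fun k _ ↦ ⟨-_, by rw [inner_neg_right, inner_two_pow_smul_stmt13e1, Int.cast_neg]⟩) l x

end Configuration

theorem stmt13_general (n N : ℕ) (hn : 0 < n)
    (η β : SchwartzMap (EuclideanSpace ℝ (Fin n)) ℂ)
    (hη : ∀ ξ : EuclideanSpace ℝ (Fin n),
      𝓕 (η : EuclideanSpace ℝ (Fin n) → ℂ) ξ ≠ 0 → ‖ξ‖ ≤ 1 / 100)
    (hβs : ∀ ξ : EuclideanSpace ℝ (Fin n),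
      𝓕 (β : EuclideanSpace ℝ (Fin n) → ℂ) ξ ≠ 0 → 10 / 11 ≤ ‖ξ‖ ∧ ‖ξ‖ ≤ 11 / 10)
    (hβ1 : ∀ ξ : EuclideanSpace ℝ (Fin n),
      20 / 21 ≤ ‖ξ‖ → ‖ξ‖ ≤ 21 / 20 → 𝓕 (β : EuclideanSpace ℝ (Fin n) → ℂ) ξ = 1)
    (x : EuclideanSpace ℝ (Fin n)) :
    (∑' l : ℤ, ∫ ξ1 : EuclideanSpace ℝ (Fin n), ∫ ξ2 : EuclideanSpace ℝ (Fin n),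
        stmt13Khat1 n N hn β ((2 : ℝ) ^ (-l) • ξ1) *
          stmt13Khat1 n N hn β ((2 : ℝ) ^ (-l) • ξ2) *
          𝓕 (stmt13f n N hn η) ξ1 * 𝓕 (stmt13g n N hn η) ξ2 *
          Complex.exp (2 * (Real.pi : ℂ) * Complex.I * ((⟪x, ξ1 + ξ2⟫ : ℝ) : ℂ))) =
      (N : ℂ) * (η x) ^ 2 := by
  have hphase (v : EuclideanSpace ℝ (Fin n)) :
      η x * 𝐞 ⟪x, v⟫ * (η x * 𝐞 ⟪x, -v⟫) = η x ^ 2 := by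
    rw [mul_mul_mul_comm, ← Circle.coe_mul, ← AddChar.map_add_eq_mul, inner_neg_right,
      add_neg_cancel, AddChar.map_zero_eq_one, Circle.coe_one, mul_one, sq]
  simp_rw [integral_integral_mul_cexp_inner_add,
    integral_stmt13Khat1_mul_fourier_stmt13f hn hη hβs hβ1,
    integral_stmt13Khat1_mul_fourier_stmt13g hn hη hβs hβ1]
  rw [tsum_sum_ite_mul_sum_ite _ (m := fun k ↦ ((10 * (k + 1) : ℕ) : ℤ))
    (fun i _ j _ h ↦ by simp only [Nat.cast_inj] at h; omega)]
  simp_rw [hphase, Finset.sum_const, Finset.card_range, nsmul_eq_mul]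

/-- with `f`, `g`, `K` as above, the bilinear multiplier operator
`B(f,g)(x) = ∑_{l∈ℤ} ∬ K̂(2^{-l}ξ₁, 2^{-l}ξ₂) f̂(ξ₁) ĝ(ξ₂) e^{2πi⟨x,ξ₁+ξ₂⟩} dξ₁dξ₂`
equals `N·η(x)²` for every `x`. -/
theorem stmt13 (n N : ℕ) (hn : 0 < n) (hN : 1 ≤ N)
    (η β : SchwartzMap (EuclideanSpace ℝ (Fin n)) ℂ)
    (hη : ∀ ξ : EuclideanSpace ℝ (Fin n),
      𝓕 (η : EuclideanSpace ℝ (Fin n) → ℂ) ξ ≠ 0 → ‖ξ‖ ≤ 1 / 100)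
    (hβs : ∀ ξ : EuclideanSpace ℝ (Fin n),
      𝓕 (β : EuclideanSpace ℝ (Fin n) → ℂ) ξ ≠ 0 → 10 / 11 ≤ ‖ξ‖ ∧ ‖ξ‖ ≤ 11 / 10)
    (hβ1 : ∀ ξ : EuclideanSpace ℝ (Fin n),
      20 / 21 ≤ ‖ξ‖ → ‖ξ‖ ≤ 21 / 20 → 𝓕 (β : EuclideanSpace ℝ (Fin n) → ℂ) ξ = 1)
    (x : EuclideanSpace ℝ (Fin n)) :
    (∑' l : ℤ, ∫ ξ1 : EuclideanSpace ℝ (Fin n), ∫ ξ2 : EuclideanSpace ℝ (Fin n),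
        stmt13Khat1 n N hn β ((2 : ℝ) ^ (-l) • ξ1) *
          stmt13Khat1 n N hn β ((2 : ℝ) ^ (-l) • ξ2) *
          𝓕 (stmt13f n N hn η) ξ1 * 𝓕 (stmt13g n N hn η) ξ2 *
          Complex.exp (2 * (Real.pi : ℂ) * Complex.I * ((⟪x, ξ1 + ξ2⟫ : ℝ) : ℂ))) =
      (N : ℂ) * (η x) ^ 2 :=
  stmt13_general n N hn η β hη hβs hβ1 x

end Stmt13
end
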